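/- Let u = p/q with p, q positive coprime integers such that p* + q* is odd. Then for every n ≥ 1, the map from ({0,1}^n) × ({0,1}^n) to ℝ sending (ε, ε') to ∑_{k=0}^{n−1} (ε_k + u·ε'_k)·4^k is injective; that is, no set V_n has a multiple point. -/

import Mathlib

/-!
Two points of `V_n` with the same value give, after multiplying by `q`, an identity
`q * A + p * B = 0` where `A` and `B` are written in base `4` with signed digits in `{-1, 0, 1}`.
A nonzero such integer is `4 ^ j` times an odd number (its lowest nonzero digit is `±1`), so its
`2`-adic valuation is even; hence `A, B ≠ 0` would force `v₂ p ≡ v₂ q (mod 2)`. On the other hand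
`n* ≡ v₂ n + 1 (mod 2)`, so `p* + q*` odd means `v₂ p + v₂ q` odd. Therefore `A = B = 0`, and
signed digits represent `0` only trivially.
-/

/-- `n* `: the first nonzero digit from the right of `n` in base `b`,
i.e. `(n / b^{j*}) % b` where `j*` is the largest `j` with `b^j ∣ n`. -/
def fstDigit (b n : ℕ) : ℕ := n / b ^ padicValNat b n % b

/-- The parametrization of `V_n`: `(ε, ε') ↦ ∑_{k=0}^{n−1} (ε_k + u·ε'_k)·4^k`. -/
def VnMap (u : ℝ) (n : ℕ) (p : (Fin n → Bool) × (Fin n → Bool)) : ℝ :=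
  ∑ k : Fin n, ((if p.1 k then (1 : ℝ) else 0) + u * (if p.2 k then (1 : ℝ) else 0))
    * 4 ^ (k : ℕ)

theorem Fin.sum_mul_pow_succ {R : Type*} [CommSemiring R] {n : ℕ} (b : R) (δ : Fin (n + 1) → R) :
    ∑ k, δ k * b ^ (k : ℕ) = δ 0 + b * ∑ k : Fin n, δ k.succ * b ^ (k : ℕ) := by
  rw [Fin.sum_univ_succ, Finset.mul_sum]
  simp only [Fin.val_zero, pow_zero, mul_one, Fin.val_succ, pow_succ]
  congr 1
  exact Finset.sum_congr rfl fun k _ => by ring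

theorem eq_zero_of_sum_mul_pow_eq_zero {b : ℤ} (hb : 2 < b) :
    ∀ {n : ℕ} {δ : Fin n → ℤ}, (∀ k, |δ k| ≤ 1) → ∑ k, δ k * b ^ (k : ℕ) = 0 → δ = 0
  | 0, δ, _, _ => Subsingleton.elim _ _
  | n + 1, δ, hδ, h => by
    rw [Fin.sum_mul_pow_succ] at h
    have h0 : δ 0 = 0 :=
      Int.eq_zero_of_abs_lt_dvd (m := b) ⟨-∑ k : Fin n, δ k.succ * b ^ (k : ℕ), by linarith⟩
        ((hδ 0).trans_lt (by linarith))
    rw [h0, zero_add, mul_eq_zero, or_iff_right (by positivity)] at h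
    have htail := eq_zero_of_sum_mul_pow_eq_zero hb (fun k => hδ k.succ) h
    ext k
    cases k using Fin.cases with
    | zero => exact h0
    | succ k => exact congrFun htail k

theorem even_padicValInt_two_sum_mul_four_pow :
    ∀ {n : ℕ} {δ : Fin n → ℤ}, (∀ k, |δ k| ≤ 1) → ∑ k, δ k * 4 ^ (k : ℕ) ≠ 0 →
      Even (padicValInt 2 (∑ k, δ k * 4 ^ (k : ℕ)))
  | 0, _, _, h => by simp at h
  | n + 1, δ, hδ, h => by
    rw [Fin.sum_mul_pow_succ] at h ⊢
    set T := ∑ k : Fin n, δ k.succ * 4 ^ (k : ℕ)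
    obtain ⟨h0l, h0u⟩ := abs_le.mp (hδ 0)
    by_cases h0 : δ 0 = 0
    · rw [h0, zero_add] at h ⊢
      have hT : T ≠ 0 := right_ne_zero_of_mul h
      have h4T : (4 : ℤ) * T = T * (2 : ℕ) * (2 : ℕ) := by push_cast; ring
      rw [h4T, padicValInt_mul_eq_succ _ (by simpa using hT), padicValInt_mul_eq_succ _ hT]
      exact (even_padicValInt_two_sum_mul_four_pow (fun k => hδ k.succ) hT).add_one.add_one
    · rw [padicValInt.eq_zero_of_not_dvd (by push_cast; omega)]
      exact ⟨0, rfl⟩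

theorem odd_mod_four_add_padicValNat_two {m : ℕ} (hm : ¬ 4 ∣ m) :
    Odd (m % 4 + padicValNat 2 m) := by
  rcases Nat.even_or_odd m with ⟨m', rfl⟩ | hodd
  · have hm' : ¬ 2 ∣ m' := by omega
    rw [← two_mul, padicValNat.mul two_ne_zero (by omega), padicValNat.self one_lt_two,
      padicValNat.eq_zero_of_not_dvd hm', Nat.odd_iff]
    omega
  · rw [Nat.odd_iff] at hodd
    rw [padicValNat.eq_zero_of_not_dvd (by omega : ¬ 2 ∣ m), add_zero, Nat.odd_iff]
    omega

theorem odd_fstDigit_four_add_padicValNat_two {n : ℕ} (hn : n ≠ 0) :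
    Odd (fstDigit 4 n + padicValNat 2 n) := by
  set j := padicValNat 4 n
  obtain ⟨m, hnm⟩ : 4 ^ j ∣ n := (padicValNat_dvd_iff_le_of_ne_one (by norm_num) hn).mpr le_rfl
  have hm : ¬ 4 ∣ m := fun ⟨c, hc⟩ => by
    have : 4 ^ (j + 1) ∣ n := ⟨c, by rw [hnm, hc, pow_succ, mul_assoc]⟩
    have := (padicValNat_dvd_iff_le_of_ne_one (by norm_num) hn).mp this
    omega
  have hm0 : m ≠ 0 := by rintro rfl; exact hn (by simpa using hnm)
  have hfst : fstDigit 4 n = m % 4 := by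
    change n / 4 ^ j % 4 = m % 4
    rw [hnm, Nat.mul_div_cancel_left _ (by positivity)]
  have hv : padicValNat 2 n = 2 * j + padicValNat 2 m := by
    rw [hnm, padicValNat.mul (by positivity) hm0, show (4 : ℕ) ^ j = 2 ^ (2 * j) by
      rw [pow_mul]; norm_num, padicValNat.prime_pow]
  rw [hfst, hv, add_left_comm]
  exact (even_two_mul j).add_odd (odd_mod_four_add_padicValNat_two hm)

theorem eq_zero_of_mul_add_mul_eq_zero {p q : ℕ} (hp : p ≠ 0) (hq : q ≠ 0)
    (hpq : Odd (padicValNat 2 p + padicValNat 2 q)) {A B : ℤ}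
    (hA : A ≠ 0 → Even (padicValInt 2 A)) (hB : B ≠ 0 → Even (padicValInt 2 B))
    (h : q * A + p * B = 0) : A = 0 ∧ B = 0 := by
  have hqA : (q : ℤ) * A = -(p * B) := by linarith
  have hiff : A = 0 ↔ B = 0 := by
    simpa [hp, hq, -neg_mul, neg_eq_zero] using congrArg (· = 0) hqA
  by_contra hne
  have hA0 : A ≠ 0 := fun h0 => hne ⟨h0, hiff.mp h0⟩
  have hB0 : B ≠ 0 := fun h0 => hA0 (hiff.mpr h0)
  have hv : padicValInt 2 (q * A) = padicValInt 2 (p * B) := by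
    rw [hqA, padicValInt, padicValInt, Int.natAbs_neg]
  rw [padicValInt.mul (by simpa using hq) hA0,
    padicValInt.mul (by simpa using hp) hB0, padicValInt.of_nat, padicValInt.of_nat] at hv
  obtain ⟨a, ha⟩ := hA hA0
  obtain ⟨b, hb⟩ := hB hB0
  obtain ⟨c, hc⟩ := hpq
  omega

theorem odd_padicValNat_two_add_of_odd_fstDigit_four_add {p q : ℕ} (hp : p ≠ 0) (hq : q ≠ 0)
    (h : Odd (fstDigit 4 p + fstDigit 4 q)) : Odd (padicValNat 2 p + padicValNat 2 q) := by
  have hp' := odd_fstDigit_four_add_padicValNat_two hp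
  have hq' := odd_fstDigit_four_add_padicValNat_two hq
  rw [Nat.odd_iff] at h hp' hq' ⊢
  omega

def digitDiff {n : ℕ} (x y : Fin n → Bool) (k : Fin n) : ℤ := (x k).toNat - (y k).toNat

theorem abs_digitDiff_le_one {n : ℕ} (x y : Fin n → Bool) (k : Fin n) : |digitDiff x y k| ≤ 1 := by
  unfold digitDiff; cases x k <;> cases y k <;> simp

theorem eq_of_digitDiff_eq_zero {n : ℕ} {x y : Fin n → Bool} (h : digitDiff x y = 0) : x = y := by
  funext k
  have hk := congrFun h k
  unfold digitDiff at hk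
  cases hx : x k <;> cases hy : y k <;> simp_all

theorem VnMap_sub (u : ℝ) {n : ℕ} (a b : (Fin n → Bool) × (Fin n → Bool)) :
    VnMap u n a - VnMap u n b =
      ((∑ k, digitDiff a.1 b.1 k * 4 ^ (k : ℕ) : ℤ) : ℝ)
        + u * ((∑ k, digitDiff a.2 b.2 k * 4 ^ (k : ℕ) : ℤ) : ℝ) := by
  have hbool : ∀ x : Bool, (if x then (1 : ℝ) else 0) = ((x.toNat : ℤ) : ℝ) := by
    intro x; cases x <;> simp
  simp only [VnMap, digitDiff, hbool]
  push_cast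
  rw [← Finset.sum_sub_distrib, Finset.mul_sum, ← Finset.sum_add_distrib]
  exact Finset.sum_congr rfl fun k _ => by ring

theorem VnMap_injective_of_odd_sum_general (p q : ℕ) (hp : 0 < p) (hq : 0 < q)
    (hodd : Odd (fstDigit 4 p + fstDigit 4 q)) :
    ∀ n : ℕ, 1 ≤ n → Function.Injective (VnMap ((p : ℝ) / q) n) := by
  intro n _ a b hab
  set A := ∑ k, digitDiff a.1 b.1 k * 4 ^ (k : ℕ)
  set B := ∑ k, digitDiff a.2 b.2 k * 4 ^ (k : ℕ)
  have hAB : (q : ℤ) * A + p * B = 0 := by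
    have hq' : (q : ℝ) ≠ 0 := by positivity
    have hreal : ((q * A + p * B : ℤ) : ℝ) = q * (VnMap (p / q) n a - VnMap (p / q) n b) := by
      rw [VnMap_sub]; push_cast [A, B]; field_simp
    rw [hab, sub_self, mul_zero] at hreal
    exact_mod_cast hreal
  obtain ⟨hA, hB⟩ := eq_zero_of_mul_add_mul_eq_zero hp.ne' hq.ne'
    (odd_padicValNat_two_add_of_odd_fstDigit_four_add hp.ne' hq.ne' hodd)
    (even_padicValInt_two_sum_mul_four_pow (abs_digitDiff_le_one _ _))
    (even_padicValInt_two_sum_mul_four_pow (abs_digitDiff_le_one _ _)) hAB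
  have h4 : (2 : ℤ) < 4 := by norm_num
  exact Prod.ext
    (eq_of_digitDiff_eq_zero (eq_zero_of_sum_mul_pow_eq_zero h4 (abs_digitDiff_le_one _ _) hA))
    (eq_of_digitDiff_eq_zero (eq_zero_of_sum_mul_pow_eq_zero h4 (abs_digitDiff_le_one _ _) hB))

/-- If `u = p/q` with `p, q` positive coprime and `p* + q*` odd, then for every `n ≥ 1`
the parametrization of `V_n` is injective: no `V_n` has a multiple point. -/
theorem VnMap_injective_of_odd_sum (p q : ℕ) (hp : 0 < p) (hq : 0 < q)
    (hpq : Nat.Coprime p q) (hodd : Odd (fstDigit 4 p + fstDigit 4 q)) :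
    ∀ n : ℕ, 1 ≤ n → Function.Injective (VnMap ((p : ℝ) / q) n) :=
  VnMap_injective_of_odd_sum_general p q hp hq hodd
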